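/- arXiv:1806.00331 — 4 statements merged into one kernel-verified Lean document; each statement's English description precedes it below -/
import Mathlib

section
/- The sum Σ_{n=1}^∞ (F_{n+2} − 1)/φ^{2n+2} equals 1/2, where F_n is the n-th Fibonacci number and φ the golden ratio. -/
noncomputable def phi : ℝ := (1 + Real.sqrt 5) / 2

/-!
By Binet's formula, `∑ F_{n+1} xⁿ = 1 / (1 - x - x²)` for `|x| < φ⁻¹`, as a difference of two
geometric series in `φx` and `ψx`. The series in question is this generating function at `x = φ⁻²`,
shifted by two, minus a geometric series; since `x = φ⁻²` satisfies `x² = 3x - 1`, its value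
`1 / (2 - 4x) - 1 - x - x² / (1 - x)` reduces to `1/2`.
-/

open Real goldenRatio

theorem hasSum_fib_succ_mul_pow {x : ℝ} (hx : |x| < φ⁻¹) :
    HasSum (fun n ↦ (Nat.fib (n + 1) : ℝ) * x ^ n) (1 - x - x ^ 2)⁻¹ := by
  have hφx : ‖φ * x‖ < 1 := calc
    ‖φ * x‖ = φ * |x| := by rw [norm_mul, norm_of_nonneg goldenRatio_pos.le, norm_eq_abs]
    _ < φ * φ⁻¹ := by gcongr
    _ = 1 := mul_inv_cancel₀ goldenRatio_ne_zero
  have hψx : ‖ψ * x‖ < 1 := by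
    refine lt_of_le_of_lt ?_ hφx
    rw [norm_mul, norm_mul]
    gcongr
    rw [norm_eq_abs, norm_eq_abs, abs_of_neg goldenConj_neg, abs_of_pos goldenRatio_pos]
    linarith [goldenRatio_add_goldenConj, goldenConj_neg, one_lt_goldenRatio]
  have hφx' : 1 - φ * x ≠ 0 := sub_ne_zero.mpr (ne_of_gt ((le_abs_self _).trans_lt hφx))
  have hψx' : 1 - ψ * x ≠ 0 := sub_ne_zero.mpr (ne_of_gt ((le_abs_self _).trans_lt hψx))
  have hprod : (1 - φ * x) * (1 - ψ * x) = 1 - x - x ^ 2 := by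
    linear_combination (-x) * goldenRatio_add_goldenConj + x ^ 2 * goldenRatio_mul_goldenConj
  have hnum : φ * (1 - ψ * x) - (1 - φ * x) * ψ = √5 := by
    rw [← goldenRatio_sub_goldenConj]
    ring
  have hsum : φ * (1 - φ * x)⁻¹ - ψ * (1 - ψ * x)⁻¹ = √5 * (1 - x - x ^ 2)⁻¹ := by
    rw [← div_eq_mul_inv, ← div_eq_mul_inv, div_sub_div _ _ hφx' hψx', hnum, hprod,
      div_eq_mul_inv]
  have key := (((hasSum_geometric_of_norm_lt_one hφx).mul_left φ).sub
    ((hasSum_geometric_of_norm_lt_one hψx).mul_left ψ)).div_const √5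
  rw [hsum, mul_div_cancel_left₀ _ (by positivity)] at key
  refine key.congr_fun fun n ↦ ?_
  rw [coe_fib_eq, mul_pow, mul_pow]
  ring

theorem hasSum_fib_add_three_sub_one_mul_pow {x : ℝ} (hx : |x| < φ⁻¹) :
    HasSum (fun n ↦ ((Nat.fib (n + 3) : ℝ) - 1) * x ^ (n + 2))
      ((1 - x - x ^ 2)⁻¹ - 1 - x - x ^ 2 * (1 - x)⁻¹) := by
  have hx₁ : |x| < 1 := hx.trans (inv_lt_one_of_one_lt₀ one_lt_goldenRatio)
  have hfib : HasSum (fun n ↦ (Nat.fib (n + 3) : ℝ) * x ^ (n + 2)) ((1 - x - x ^ 2)⁻¹ - 1 - x) := by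
    simpa [Finset.sum_range_succ, sub_sub] using
      (hasSum_nat_add_iff' 2).mpr (hasSum_fib_succ_mul_pow hx)
  refine (hfib.sub ((hasSum_geometric_of_abs_lt_one hx₁).mul_left (x ^ 2))).congr_fun fun n ↦ ?_
  ring

theorem inv_goldenRatio_sq : φ⁻¹ ^ 2 = 2 - φ := by
  rw [inv_goldenRatio, neg_sq, goldenConj_sq]
  linarith [goldenRatio_add_goldenConj]

/-- `∑_{n=1}^∞ (F_{n+2} − 1)/φ^{2n+2} = 1/2`, written with the sum reindexed over `n : ℕ`
(the term for `n` corresponds to the paper's `n + 1`). -/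
theorem sum_fib_div_phi_pow_eq_half :
    ∑' n : ℕ, ((Nat.fib (n + 3) : ℝ) - 1) / phi ^ (2 * (n + 1) + 2) = 1 / 2 := by
  have hx : |φ⁻¹ ^ 2| < φ⁻¹ := by
    rw [abs_of_nonneg (sq_nonneg _)]
    exact pow_lt_self_of_lt_one₀ (inv_pos.mpr goldenRatio_pos)
      (inv_lt_one_of_one_lt₀ one_lt_goldenRatio) one_lt_two
  have hterm (n : ℕ) : ((Nat.fib (n + 3) : ℝ) - 1) / phi ^ (2 * (n + 1) + 2)
      = ((Nat.fib (n + 3) : ℝ) - 1) * (φ⁻¹ ^ 2) ^ (n + 2) := by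
    rw [show phi = φ from rfl, show 2 * (n + 1) + 2 = 2 * (n + 2) by ring, div_eq_mul_inv,
      ← inv_pow, pow_mul]
  have hquad : (φ⁻¹ ^ 2) ^ 2 = 3 * φ⁻¹ ^ 2 - 1 := by
    rw [inv_goldenRatio_sq]
    linear_combination goldenRatio_sq
  rw [tsum_congr hterm, (hasSum_fib_add_three_sub_one_mul_pow hx).tsum_eq]
  generalize φ⁻¹ ^ 2 = x at hquad ⊢
  have h₁ : 1 - x ≠ 0 := by intro h; nlinarith
  have h₂ : 1 - 2 * x ≠ 0 := by intro h; nlinarith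
  rw [show 1 - x - x ^ 2 = 2 * (1 - 2 * x) by linear_combination -hquad]
  field_simp
  linear_combination (-2) * hquad
end

section
/- The hyperbinary sequence H, counting the number of ways to write n as a sum of powers of 2 where each power is used at most twice, satisfies H(0) = 1, H(2n+1) = H(n), and H(2n+2) = H(n) + H(n+1) for all n ≥ 0. -/
/-!
Split off the multiplicity `a ∈ {0, 1, 2}` of `2^0`: what remains is a representation of
`(m - a) / 2`. For odd `m` this forces `a = 1`, leaving `(m - 1) / 2`; for `m = 2n + 2` either
`a = 2`, leaving `n`, or `a = 0`, leaving `n + 1`.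
-/

/-- `hyperbinary n` counts the representations of `n` as a sum of powers of two in which
each power `2^k` is used at most twice: a representation is a finitely supported
multiplicity function `c : ℕ →₀ ℕ` with `c k ≤ 2` for all `k` and `∑ k, c k * 2^k = n`. -/
noncomputable def hyperbinary (n : ℕ) : ℕ :=
  Nat.card {c : ℕ →₀ ℕ // (∀ k, c k ≤ 2) ∧ c.sum (fun k a => a * 2 ^ k) = n}

namespace Finsupp

variable {M : Type*} [Zero M]

noncomputable def natCons (a : M) (c : ℕ →₀ M) : ℕ →₀ M :=
  ofSupportFinite (fun k => Nat.casesOn k a c) <| by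
    refine ((c.hasFiniteSupport.image Nat.succ).insert 0).subset ?_
    rintro (_ | k) hk
    · exact Set.mem_insert 0 _
    · exact Set.mem_insert_of_mem 0 ⟨k, hk, rfl⟩

@[simp]
theorem natCons_zero (a : M) (c : ℕ →₀ M) : natCons a c 0 = a := rfl

@[simp]
theorem natCons_succ (a : M) (c : ℕ →₀ M) (k : ℕ) : natCons a c (k + 1) = c k := rfl

theorem natCons_inj {a b : M} {c d : ℕ →₀ M} :
    natCons a c = natCons b d ↔ a = b ∧ c = d := by
  refine ⟨fun h => ⟨by simpa using DFunLike.congr_fun h 0, ext fun k => by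
    simpa using DFunLike.congr_fun h (k + 1)⟩, ?_⟩
  rintro ⟨rfl, rfl⟩
  rfl

theorem natCons_injective (a : M) : Function.Injective (natCons a) :=
  fun _ _ h => (natCons_inj.mp h).2

theorem exists_natCons_eq (c : ℕ →₀ M) : ∃ a d, natCons a d = c :=
  ⟨c 0, comapDomain Nat.succ c Nat.succ_injective.injOn, ext fun k => by cases k <;> rfl⟩

theorem natCons_mem_image_natCons {a b : M} {c : ℕ →₀ M} {s : Set (ℕ →₀ M)} :
    natCons a c ∈ natCons b '' s ↔ a = b ∧ c ∈ s := by
  constructor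
  · rintro ⟨e, he, h⟩
    obtain ⟨rfl, rfl⟩ := natCons_inj.mp h
    exact ⟨rfl, he⟩
  · rintro ⟨rfl, hc⟩
    exact ⟨c, hc, rfl⟩

theorem disjoint_image_natCons {a b : M} (hab : a ≠ b) (s t : Set (ℕ →₀ M)) :
    Disjoint (natCons a '' s) (natCons b '' t) := by
  rw [Set.disjoint_left]
  rintro _ ⟨c, -, rfl⟩ hc
  exact hab (natCons_mem_image_natCons.mp hc).1

theorem sum_natCons {N : Type*} [AddCommMonoid N] (a : M) (c : ℕ →₀ M) {g : ℕ → M → N}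
    (hg : ∀ k, g k 0 = 0) : (natCons a c).sum g = g 0 a + c.sum fun k => g (k + 1) := by
  obtain ⟨n, hn⟩ := c.support.exists_nat_subset_range
  have hcons : (natCons a c).support ⊆ Finset.range (n + 1) := by
    rintro (_ | k) hk
    · simp
    · simpa using hn (by simpa using hk)
  rw [sum_of_support_subset _ hcons _ fun k _ => hg k,
    sum_of_support_subset _ hn _ fun k _ => hg (k + 1), Finset.sum_range_succ', add_comm]
  rfl

theorem sum_natCons_mul_pow {R : Type*} [CommSemiring R] (b a : R) (c : ℕ →₀ R) :
    (natCons a c).sum (fun k m => m * b ^ k) = a + b * c.sum (fun k m => m * b ^ k) := by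
  rw [sum_natCons _ _ fun k => zero_mul _, pow_zero, mul_one, mul_sum]
  simp only [pow_succ]
  congr 1
  exact sum_congr fun k _ => by ring

end Finsupp

open Finsupp Set

def hyperbinaryReps (n : ℕ) : Set (ℕ →₀ ℕ) :=
  {c | (∀ k, c k ≤ 2) ∧ c.sum (fun k a => a * 2 ^ k) = n}

theorem hyperbinary_eq_ncard (n : ℕ) : hyperbinary n = (hyperbinaryReps n).ncard :=
  Nat.card_coe_set_eq _

theorem natCons_mem_hyperbinaryReps {a n : ℕ} {d : ℕ →₀ ℕ} :
    natCons a d ∈ hyperbinaryReps n ↔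
      a ≤ 2 ∧ (∀ k, d k ≤ 2) ∧ a + 2 * d.sum (fun k m => m * 2 ^ k) = n := by
  have hforall : (∀ k, natCons a d k ≤ 2) ↔ a ≤ 2 ∧ ∀ k, d k ≤ 2 :=
    ⟨fun h => ⟨h 0, fun k => h (k + 1)⟩, fun ⟨ha, hd⟩ k => by cases k <;> simp [ha, hd]⟩
  rw [hyperbinaryReps, mem_ofPred_eq, hforall, sum_natCons_mul_pow, and_assoc]

theorem hyperbinaryReps_zero : hyperbinaryReps 0 = {0} := by
  ext c
  refine ⟨fun ⟨_, hc⟩ => ?_, ?_⟩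
  · ext k
    by_contra hk
    have hterm := Finset.sum_eq_zero_iff.mp hc k (mem_support_iff.mpr hk)
    exact hk ((mul_eq_zero.mp hterm).resolve_right (by positivity))
  · rintro rfl
    simp [hyperbinaryReps]

theorem hyperbinaryReps_odd (n : ℕ) :
    hyperbinaryReps (2 * n + 1) = natCons 1 '' hyperbinaryReps n := by
  ext c
  obtain ⟨a, d, rfl⟩ := exists_natCons_eq c
  rw [natCons_mem_image_natCons, natCons_mem_hyperbinaryReps]
  constructor <;> rintro ⟨ha, hd, hv⟩ <;> exact ⟨by omega, hd, by omega⟩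

theorem hyperbinaryReps_even (n : ℕ) :
    hyperbinaryReps (2 * n + 2) =
      natCons 2 '' hyperbinaryReps n ∪ natCons 0 '' hyperbinaryReps (n + 1) := by
  ext c
  obtain ⟨a, d, rfl⟩ := exists_natCons_eq c
  rw [mem_union, natCons_mem_image_natCons, natCons_mem_image_natCons,
    natCons_mem_hyperbinaryReps]
  constructor
  · rintro ⟨ha, hd, hv⟩
    obtain rfl | rfl : a = 2 ∨ a = 0 := by omega
    · exact Or.inl ⟨rfl, hd, by omega⟩
    · exact Or.inr ⟨rfl, hd, by omega⟩
  · rintro (⟨rfl, hd, hv⟩ | ⟨rfl, hd, hv⟩) <;> exact ⟨by omega, hd, by omega⟩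

theorem hyperbinaryReps_finite (n : ℕ) : (hyperbinaryReps n).Finite := by
  induction n using Nat.strong_induction_on with
  | _ n ih =>
    obtain ⟨m, rfl | rfl⟩ := Nat.even_or_odd' n
    · cases m with
      | zero => simp [hyperbinaryReps_zero]
      | succ m =>
        rw [Nat.mul_succ, hyperbinaryReps_even]
        exact ((ih m (by omega)).image _).union ((ih (m + 1) (by omega)).image _)
    · rw [hyperbinaryReps_odd]
      exact (ih m (by omega)).image _

theorem hyperbinary_recurrence :
    hyperbinary 0 = 1 ∧
    (∀ n : ℕ, hyperbinary (2 * n + 1) = hyperbinary n) ∧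
    (∀ n : ℕ, hyperbinary (2 * n + 2) = hyperbinary n + hyperbinary (n + 1)) := by
  simp only [hyperbinary_eq_ncard]
  refine ⟨by rw [hyperbinaryReps_zero, ncard_singleton], fun n => ?_, fun n => ?_⟩
  · rw [hyperbinaryReps_odd, ncard_image_of_injective _ (natCons_injective 1)]
  · rw [hyperbinaryReps_even, ncard_union_eq (disjoint_image_natCons (by norm_num) _ _)
      ((hyperbinaryReps_finite n).image _) ((hyperbinaryReps_finite (n + 1)).image _),
      ncard_image_of_injective _ (natCons_injective 2),
      ncard_image_of_injective _ (natCons_injective 0)]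
end

section
/- Zeckendorf's theorem: every positive integer has a unique representation as a sum of distinct, pairwise non-consecutive Fibonacci numbers F_k with k ≥ 2. -/
/-!
Mathlib proves Zeckendorf's theorem for lists: `Nat.zeckendorf` is the unique list of indices
that is strictly decreasing with gaps of at least two and ends in an index `≥ 2`
(`List.IsZeckendorfRep`). A finite set of indices `≥ 2` without two consecutive elements is
exactly such a list once sorted decreasingly, so the set version follows by transport.
-/

namespace List

theorem isZeckendorfRep_iff_pairwise {l : List ℕ} :
    l.IsZeckendorfRep ↔ (l ++ [0]).Pairwise fun a b ↦ b + 2 ≤ a :=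
  haveI : Trans (fun a b : ℕ ↦ b + 2 ≤ a) (fun a b ↦ b + 2 ≤ a) (fun a b ↦ b + 2 ≤ a) :=
    ⟨fun hab hbc ↦ by omega⟩
  isChain_iff_pairwise

namespace IsZeckendorfRep

variable {l : List ℕ}

theorem pairwise (hl : l.IsZeckendorfRep) : l.Pairwise fun a b ↦ b + 2 ≤ a :=
  (pairwise_append.1 (isZeckendorfRep_iff_pairwise.1 hl)).1

theorem two_le (hl : l.IsZeckendorfRep) {k : ℕ} (hk : k ∈ l) : 2 ≤ k :=
  (pairwise_append.1 (isZeckendorfRep_iff_pairwise.1 hl)).2.2 k hk 0 (mem_singleton_self 0)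

theorem nodup (hl : l.IsZeckendorfRep) : l.Nodup :=
  hl.pairwise.imp fun h ↦ by omega

theorem succ_notMem (hl : l.IsZeckendorfRep) {k : ℕ} (hk : k ∈ l) : k + 1 ∉ l := by
  intro hk1
  have : Std.Symm fun a b : ℕ ↦ a ≠ b + 1 ∧ b ≠ a + 1 := ⟨fun _ _ h ↦ h.symm⟩
  have hgap : l.Pairwise fun a b ↦ a ≠ b + 1 ∧ b ≠ a + 1 := hl.pairwise.imp fun h ↦ by omega
  exact (hgap.forall hk hk1 (by omega)).2 rfl

end IsZeckendorfRep

end List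

namespace Finset

theorem isZeckendorfRep_sort {S : Finset ℕ} (h2 : ∀ k ∈ S, 2 ≤ k) (hc : ∀ k ∈ S, k + 1 ∉ S) :
    (S.sort (· ≥ ·)).IsZeckendorfRep := by
  rw [List.isZeckendorfRep_iff_pairwise, List.pairwise_append]
  refine ⟨?_, List.pairwise_singleton _ _, fun a ha b hb ↦ ?_⟩
  · refine (List.sortedGT_iff_pairwise.1 S.sortedGT_sort).imp_of_mem fun {a b} ha hb hab ↦ ?_
    have hb1 : b + 1 ≠ a := fun h ↦ hc b ((mem_sort _).1 hb) (h ▸ (mem_sort _).1 ha)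
    omega
  · rw [List.mem_singleton.1 hb]
    exact h2 a ((mem_sort _).1 ha)

end Finset

/-- Zeckendorf's theorem: every positive integer is uniquely a sum of distinct,
pairwise non-consecutive Fibonacci numbers `F k` with `k ≥ 2`. -/
theorem zeckendorf (n : ℕ) :
    ∃! S : Finset ℕ, (∀ k ∈ S, 2 ≤ k) ∧ (∀ k ∈ S, k + 1 ∉ S) ∧ ∑ k ∈ S, Nat.fib k = n := by
  have hrep := Nat.isZeckendorfRep_zeckendorf n
  refine ⟨n.zeckendorf.toFinset, ⟨?_, ?_, ?_⟩, ?_⟩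
  · simpa using fun _ ↦ hrep.two_le
  · simpa using fun _ ↦ hrep.succ_notMem
  · rw [List.sum_toFinset _ hrep.nodup, Nat.sum_zeckendorf_fib]
  · rintro S ⟨h2, hc, rfl⟩
    have hsum : ∑ k ∈ S, Nat.fib k = ((S.sort (· ≥ ·)).map Nat.fib).sum := by
      rw [← List.sum_toFinset _ (S.sort_nodup _), Finset.sort_toFinset]
    rw [hsum, Nat.zeckendorf_sum_fib (Finset.isZeckendorfRep_sort h2 hc), Finset.sort_toFinset]
end

section
/- Under the perspective projection of the positive x-axis onto the positive y-axis through the focal point (1/(1−r), r/(r−1)) with r > 0, r ≠ 1, the point (Σ_{i=0}^n r^i, 0) maps to the point (0, Σ_{i=0}^n r^{-i}) for every n ≥ 0. -/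
/-!
Write `s` and `t` for the two partial sums. Reversing the order of summation gives
`r ^ n * t = s`, and `(1 - r) * s = 1 - r ^ (n + 1)`; together they give
`t - r * s = (1 - r) * s * t`. Dividing by `1 - r`, this says that the focal point
lies on the line `x / s + y / t = 1` through `(s, 0)` and `(0, t)`.
-/

open Finset

theorem collinear_of_mul_add_mul_eq_mul {k : Type*} [Field k] {a b s t : k} (hs : s ≠ 0)
    (h : a * t + b * s = s * t) :
    Collinear k ({(a, b), (s, 0), (0, t)} : Set (k × k)) := by
  rw [collinear_iff_of_mem (p₀ := (s, 0)) (by simp)]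
  refine ⟨(-s, t), ?_⟩
  simp only [Set.mem_insert_iff, Set.mem_singleton_iff]
  rintro p (rfl | rfl | rfl)
  · refine ⟨(s - a) / s, Prod.ext ?_ ?_⟩
    · simp only [Prod.smul_mk, smul_eq_mul, vadd_eq_add, Prod.fst_add]
      field_simp
      ring
    · simp only [Prod.smul_mk, smul_eq_mul, vadd_eq_add, Prod.snd_add]
      field_simp
      linear_combination h
  · exact ⟨0, by simp⟩
  · exact ⟨1, by simp⟩

theorem pow_mul_geom_sum_inv {K : Type*} [DivisionRing K] {x : K} (hx : x ≠ 0) (n : ℕ) :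
    x ^ n * ∑ i ∈ range (n + 1), x⁻¹ ^ i = ∑ i ∈ range (n + 1), x ^ i := by
  rw [mul_sum, ← sum_range_reflect]
  refine sum_congr rfl fun i hi => ?_
  have hin : i ≤ n := Nat.lt_succ_iff.mp (mem_range.mp hi)
  rw [Nat.add_sub_cancel, inv_pow, ← pow_sub₀ x hx (Nat.sub_le n i), Nat.sub_sub_self hin]

/-- The line through the focal point `(1/(1−r), r/(r−1))` and the point `(∑_{i=0}^n r^i, 0)`
on the x-axis meets the y-axis at `(0, ∑_{i=0}^n r^{-i})`: the three points are collinear. -/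
theorem geometric_series_perspective_projection (r : ℝ) (hr : 0 < r) (hr1 : r ≠ 1) (n : ℕ) :
    Collinear ℝ
      ({(1 / (1 - r), r / (r - 1)),
        (∑ i ∈ Finset.range (n + 1), r ^ i, 0),
        (0, ∑ i ∈ Finset.range (n + 1), r⁻¹ ^ i)} : Set (ℝ × ℝ)) := by
  set s := ∑ i ∈ range (n + 1), r ^ i
  set t := ∑ i ∈ range (n + 1), r⁻¹ ^ i
  have hst : r ^ n * t = s := pow_mul_geom_sum_inv hr.ne' n
  have hs : (1 - r) * s = 1 - r ^ (n + 1) := mul_neg_geom_sum r (n + 1)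
  have key : t - r * s = (1 - r) * s * t := by linear_combination r * hst - t * hs
  have h1r : 1 - r ≠ 0 := sub_ne_zero.mpr hr1.symm
  refine collinear_of_mul_add_mul_eq_mul (by positivity) ?_
  calc 1 / (1 - r) * t + r / (r - 1) * s = (t - r * s) / (1 - r) := by
        rw [← neg_div_neg_eq r, neg_sub]; ring
    _ = s * t := by rw [key]; field_simp
end
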